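/- Let γ > 0 and α > 0 be constants such that α + γ·cos_p^{(p-1)}(ψ)·sin_p(ψ) > 0 for all ψ ∈ [-π_p/2, π_p/2]. Then the time δ needed for the solution of ψ' = α + γ·cos_p^{(p-1)}(ψ)·sin_p(ψ), ψ(0) = -π_p/2, to reach π_p/2 equals ∫_{-π_p/2}^{π_p/2} dψ/(α + γ·cos_p^{(p-1)}(ψ)·sin_p(ψ)), and this integral is strictly greater than π_p/α. -/

import Mathlib

open Real Set Filter MeasureTheory

/-- The signed power `x^{(q)} := |x|^{q-?}`; here `spow x q = |x|^q · sign x`,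
so that `x^{(p-1)} = |x|^{p-2}·x = spow x (p-1)`. -/
noncomputable def spow (x q : ℝ) : ℝ := Real.sign x * |x| ^ q

/-- The generalized half-period `π_p = ∫_{-1}^1 (1-|s|^p)^{-1/p} ds`. -/
noncomputable def pip (p : ℝ) : ℝ := ∫ s in (-1:ℝ)..1, (1 - |s| ^ p) ^ (-1/p)

/-- `sinp` and `cosp` are the generalized p-trigonometric functions:
on `[-π_p/2, π_p/2]` the function `sinp` is defined implicitly by
`t = ∫_0^{sinp t} (1-|s|^p)^{-1/p} ds`, it satisfies the reflection rule
`sinp t = sinp (π_p - t)` on `[π_p/2, 3π_p/2]`, is `2π_p`-periodic, and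
`cosp` is its derivative. -/
def IsPTrig (p : ℝ) (sinp cosp : ℝ → ℝ) : Prop :=
  (∀ t ∈ Set.Icc (-(pip p)/2) (pip p/2),
      t = ∫ s in (0:ℝ)..(sinp t), (1 - |s| ^ p) ^ (-1/p)) ∧
  (∀ t ∈ Set.Icc (pip p/2) (3 * pip p/2), sinp t = sinp (pip p - t)) ∧
  (∀ t, sinp (t + 2 * pip p) = sinp t) ∧
  (∀ t, HasDerivAt sinp (cosp t) t)

/-!
The equation is separable: up to its first hitting time of `π_p/2` the solution stays in
`[-π_p/2, π_p/2]`, where the right-hand side `f` is positive, so substituting `y = ψ t` gives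
`δ = ∫ dy / f(y)`. Differentiating `arcsin_p (sin_p t) = t` shows `cos_p = (1 - |sin_p|^p)^{1/p}`
on that interval, so `f = α + γ h` with `h` continuous, odd and not identically zero. Thus `f`
has mean `α`, and the tangent line of `x ↦ 1/x` at `α` gives `∫ 1/f > π_p/α`.
-/

open scoped Topology

lemma abs_sub_le_abs_sub_rpow {u p : ℝ} (hu : 0 ≤ u) (hp : 1 ≤ p) :
    |1 - u| ≤ |1 - u ^ p| := by
  rcases le_total u 1 with h | h
  · have := rpow_le_self_of_le_one hu h hp
    rw [abs_of_nonneg (sub_nonneg.2 h), abs_of_nonneg (sub_nonneg.2 (this.trans h))]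
    linarith
  · have := self_le_rpow_of_one_le h hp
    rw [abs_of_nonpos (sub_nonpos.2 h), abs_of_nonpos (sub_nonpos.2 (h.trans this))]
    linarith

lemma intervalIntegrable_abs_sub_rpow {r : ℝ} (hr : -1 < r) (c a b : ℝ) :
    IntervalIntegrable (fun s => |s - c| ^ r) volume a b := by
  have hloc : LocallyIntegrable (fun x : ℝ => |x| ^ r) :=
    locallyIntegrable_of_norm_le_rpow (C := 1) (α := -r) (by simp) (by simp; linarith)
      (ae_of_all _ fun x => by simp [abs_rpow_of_nonneg (abs_nonneg x)])
      (by fun_prop : Measurable fun x : ℝ => |x| ^ r).aestronglyMeasurable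
  simpa using ((hloc.integrableOn_isCompact isCompact_uIcc).intervalIntegrable
    (a := a - c) (b := b - c)).comp_sub_right c

noncomputable def pIntegrand (p s : ℝ) : ℝ := (1 - |s| ^ p) ^ (-1/p)

noncomputable def arcsinp (p y : ℝ) : ℝ := ∫ s in (0:ℝ)..y, pIntegrand p s

section arcsinp

variable {p : ℝ}

lemma one_sub_abs_rpow_ne_zero (hp : 0 < p) {y : ℝ} (hy : |y| ≠ 1) : 1 - |y| ^ p ≠ 0 := by
  rw [sub_ne_zero, ne_comm, ← one_rpow p]
  exact fun h => hy ((rpow_left_inj (abs_nonneg y) zero_le_one hp.ne').1 h)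

lemma pIntegrand_neg (s : ℝ) : pIntegrand p (-s) = pIntegrand p s := by
  simp [pIntegrand]

lemma measurable_pIntegrand : Measurable (pIntegrand p) := by
  unfold pIntegrand; fun_prop

lemma pIntegrand_pos (hp : 0 < p) {s : ℝ} (hs : |s| < 1) : 0 < pIntegrand p s :=
  rpow_pos_of_pos (sub_pos.2 (rpow_lt_one (abs_nonneg s) hs hp)) _

lemma continuousAt_pIntegrand (hp : 0 < p) {y : ℝ} (hy : |y| ≠ 1) :
    ContinuousAt (pIntegrand p) y :=
  (continuous_const.sub (continuous_abs.rpow_const fun _ => Or.inr hp.le)).continuousAt.rpow_const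
    (Or.inl (one_sub_abs_rpow_ne_zero hp hy))

lemma abs_pIntegrand_le (hp : 1 < p) (s : ℝ) :
    |pIntegrand p s| ≤ |s - 1| ^ (-1/p) + |s + 1| ^ (-1/p) := by
  have hexp : -1/p ≤ 0 := div_nonpos_of_nonpos_of_nonneg (by norm_num) (by linarith)
  have hnear : abs (1 - |s|) ^ (-1/p) ≤ |s - 1| ^ (-1/p) + |s + 1| ^ (-1/p) := by
    rcases le_total 0 s with hs | hs
    · rw [abs_of_nonneg hs, abs_sub_comm]
      exact le_add_of_nonneg_right (by positivity)
    · rw [abs_of_nonpos hs, sub_neg_eq_add, add_comm]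
      exact le_add_of_nonneg_left (by positivity)
  refine (abs_rpow_le_abs_rpow _ _).trans (le_trans ?_ hnear)
  rcases eq_or_ne |s| 1 with h | h
  · rw [h, one_rpow, sub_self, abs_zero, zero_rpow (by simp; linarith)]
  · exact rpow_le_rpow_of_nonpos (abs_pos.2 (sub_ne_zero.2 (Ne.symm h)))
      (abs_sub_le_abs_sub_rpow (abs_nonneg s) hp.le) hexp

lemma intervalIntegrable_pIntegrand (hp : 1 < p) (a b : ℝ) :
    IntervalIntegrable (pIntegrand p) volume a b := by
  have hr : -1 < -1/p := by rw [neg_div, neg_lt_neg_iff, div_lt_one] <;> linarith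
  refine ((intervalIntegrable_abs_sub_rpow hr 1 a b).add
    (by simpa using intervalIntegrable_abs_sub_rpow hr (-1) a b)).mono_fun
    measurable_pIntegrand.aestronglyMeasurable.restrict (ae_of_all _ fun s => ?_)
  simp only [Real.norm_eq_abs]
  rw [abs_of_nonneg (by positivity : (0:ℝ) ≤ |s - 1| ^ (-1/p) + |s + 1| ^ (-1/p))]
  exact abs_pIntegrand_le hp s

lemma arcsinp_neg (y : ℝ) : arcsinp p (-y) = -arcsinp p y := by
  have h := intervalIntegral.integral_comp_neg (a := 0) (b := y) (pIntegrand p)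
  simp only [pIntegrand_neg, neg_zero] at h
  rw [arcsinp, arcsinp, intervalIntegral.integral_symm (-y) 0, ← h]

lemma arcsinp_zero : arcsinp p 0 = 0 := intervalIntegral.integral_same

lemma strictMonoOn_arcsinp (hp : 1 < p) : StrictMonoOn (arcsinp p) (Icc (-1) 1) := by
  intro y hy z hz hyz
  rw [← sub_pos, arcsinp, arcsinp, intervalIntegral.integral_interval_sub_left
    (intervalIntegrable_pIntegrand hp _ _) (intervalIntegrable_pIntegrand hp _ _)]
  refine intervalIntegral.intervalIntegral_pos_of_pos_on (intervalIntegrable_pIntegrand hp _ _)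
    (fun s hs => pIntegrand_pos (by linarith) (abs_lt.2 ⟨?_, ?_⟩)) hyz
  · linarith [hy.1, hs.1]
  · linarith [hz.2, hs.2]

lemma hasDerivAt_arcsinp (hp : 1 < p) {y : ℝ} (hy : |y| ≠ 1) :
    HasDerivAt (arcsinp p) (pIntegrand p y) y :=
  intervalIntegral.integral_hasDerivAt_right (intervalIntegrable_pIntegrand hp 0 y)
    measurable_pIntegrand.aestronglyMeasurable.stronglyMeasurableAtFilter
    (continuousAt_pIntegrand (by linarith) hy)

lemma arcsinp_one (hp : 1 < p) : arcsinp p 1 = pip p / 2 := by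
  have h : pip p = arcsinp p 1 - arcsinp p (-1) :=
    (intervalIntegral.integral_interval_sub_left (intervalIntegrable_pIntegrand hp _ _)
      (intervalIntegrable_pIntegrand hp _ _)).symm
  rw [h, arcsinp_neg]
  ring

lemma arcsinp_neg_one (hp : 1 < p) : arcsinp p (-1) = -(pip p / 2) := by
  rw [arcsinp_neg, arcsinp_one hp]

lemma pip_pos (hp : 1 < p) : 0 < pip p := by
  have := strictMonoOn_arcsinp hp (by norm_num : (0:ℝ) ∈ Icc (-1) 1)
    (by norm_num : (1:ℝ) ∈ Icc (-1) 1) one_pos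
  rw [arcsinp_zero, arcsinp_one hp] at this
  linarith

end arcsinp

lemma HasDerivAt.eq_zero_of_eventually_eq_reflect {f : ℝ → ℝ} {a d : ℝ} {s : Set ℝ}
    (hf : HasDerivAt f d a) (hs : UniqueDiffWithinAt ℝ s a)
    (hrefl : ∀ᶠ t in 𝓝[s] a, f t = f (2 * a - t)) : d = 0 := by
  have hreflect : HasDerivAt (fun t => f (2 * a - t)) (-d) a :=
    HasDerivAt.comp_const_sub (2 * a) a (by rwa [show 2 * a - a = a by ring])
  have hzero : HasDerivWithinAt (fun t => f t - f (2 * a - t)) 0 s a :=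
    (hasDerivWithinAt_const a s 0).congr_of_eventuallyEq (hrefl.mono fun t ht => by simp [ht])
      (by simp [show 2 * a - a = a by ring])
  have := hs.eq_deriv _ (hf.sub hreflect).hasDerivWithinAt hzero
  linarith

lemma spow_of_nonneg {x q : ℝ} (hx : 0 ≤ x) (hq : q ≠ 0) : spow x q = x ^ q := by
  rcases hx.eq_or_lt with rfl | hx
  · simp [spow, zero_rpow hq]
  · rw [spow, sign_of_pos hx, one_mul, abs_of_pos hx]

namespace IsPTrig

variable {p : ℝ} {sinp cosp : ℝ → ℝ}

lemma continuous_sinp (h : IsPTrig p sinp cosp) : Continuous sinp :=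
  continuous_iff_continuousAt.2 fun t => (h.2.2.2 t).continuousAt

lemma arcsinp_sinp (h : IsPTrig p sinp cosp) {t : ℝ} (ht : t ∈ Icc (-(pip p / 2)) (pip p / 2)) :
    arcsinp p (sinp t) = t :=
  (h.1 t (by rwa [neg_div])).symm

lemma cosp_right_eq_zero (h : IsPTrig p sinp cosp) (hp : 1 < p) : cosp (pip p / 2) = 0 := by
  refine (h.2.2.2 _).eq_zero_of_eventually_eq_reflect (uniqueDiffWithinAt_Ici _) ?_
  filter_upwards [Icc_mem_nhdsGE (by linarith [pip_pos hp] : pip p / 2 < 3 * pip p / 2)]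
    with t ht
  rw [h.2.1 t ht]
  ring_nf

lemma cosp_left_eq_zero (h : IsPTrig p sinp cosp) (hp : 1 < p) : cosp (-(pip p / 2)) = 0 := by
  refine (h.2.2.2 _).eq_zero_of_eventually_eq_reflect (uniqueDiffWithinAt_Iic _) ?_
  filter_upwards [Icc_mem_nhdsLE (by linarith [pip_pos hp] : -(3 * pip p / 2) < -(pip p / 2))]
    with t ht
  -- periodicity carries the reflection rule from `π_p/2` over to `-π_p/2`
  rw [← h.2.2.1 t, h.2.1 _ ⟨by linarith [ht.1], by linarith [ht.2]⟩]
  ring_nf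

lemma pIntegrand_sinp_mul_cosp (h : IsPTrig p sinp cosp) (hp : 1 < p) {t : ℝ}
    (ht : t ∈ Icc (-(pip p / 2)) (pip p / 2)) (hs : |sinp t| ≠ 1) :
    pIntegrand p (sinp t) * cosp t = 1 := by
  have hcomp := (hasDerivAt_arcsinp hp hs).comp t (h.2.2.2 t)
  have hid : HasDerivWithinAt (arcsinp p ∘ sinp) 1 (Icc (-(pip p / 2)) (pip p / 2)) t :=
    (hasDerivWithinAt_id t _).congr (fun x hx => h.arcsinp_sinp hx) (h.arcsinp_sinp ht)
  exact (uniqueDiffOn_Icc (by linarith [pip_pos hp]) t ht).eq_deriv _ hcomp.hasDerivWithinAt hid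

lemma abs_sinp_eq_one_of_cosp_eq_zero (h : IsPTrig p sinp cosp) (hp : 1 < p) {t : ℝ}
    (ht : t ∈ Icc (-(pip p / 2)) (pip p / 2)) (hcos : cosp t = 0) :
    |sinp t| = 1 := by
  by_contra hs
  simpa [hcos] using h.pIntegrand_sinp_mul_cosp hp ht hs

lemma sinp_right (h : IsPTrig p sinp cosp) (hp : 1 < p) : sinp (pip p / 2) = 1 := by
  have hc := pip_pos hp
  have hmem : pip p / 2 ∈ Icc (-(pip p / 2)) (pip p / 2) := ⟨by linarith, le_rfl⟩
  rcases abs_eq zero_le_one |>.1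
    (h.abs_sinp_eq_one_of_cosp_eq_zero hp hmem (h.cosp_right_eq_zero hp)) with h1 | h1
  · exact h1
  · have := h.arcsinp_sinp hmem
    rw [h1, arcsinp_neg_one hp] at this
    linarith

lemma sinp_left (h : IsPTrig p sinp cosp) (hp : 1 < p) : sinp (-(pip p / 2)) = -1 := by
  have hc := pip_pos hp
  have hmem : -(pip p / 2) ∈ Icc (-(pip p / 2)) (pip p / 2) := ⟨le_rfl, by linarith⟩
  rcases abs_eq zero_le_one |>.1
    (h.abs_sinp_eq_one_of_cosp_eq_zero hp hmem (h.cosp_left_eq_zero hp)) with h1 | h1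
  · have := h.arcsinp_sinp hmem
    rw [h1, arcsinp_one hp] at this
    linarith
  · exact h1

lemma strictMonoOn_sinp (h : IsPTrig p sinp cosp) (hp : 1 < p) :
    StrictMonoOn sinp (Icc (-(pip p / 2)) (pip p / 2)) :=
  h.continuous_sinp.continuousOn.strictMonoOn_of_injOn_Icc (by linarith [pip_pos hp])
    (by rw [h.sinp_left hp, h.sinp_right hp]; norm_num)
    (fun x hx y hy hxy => by rw [← h.arcsinp_sinp hx, ← h.arcsinp_sinp hy, hxy])

lemma sinp_mem_Icc (h : IsPTrig p sinp cosp) (hp : 1 < p) {t : ℝ}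
    (ht : t ∈ Icc (-(pip p / 2)) (pip p / 2)) : sinp t ∈ Icc (-1) 1 := by
  have hc := pip_pos hp
  have hmono := (h.strictMonoOn_sinp hp).monotoneOn
  rw [← h.sinp_left hp, ← h.sinp_right hp]
  exact ⟨hmono ⟨le_rfl, by linarith⟩ ht ht.1, hmono ht ⟨by linarith, le_rfl⟩ ht.2⟩

lemma abs_sinp_lt_one (h : IsPTrig p sinp cosp) (hp : 1 < p) {t : ℝ}
    (ht : t ∈ Ioo (-(pip p / 2)) (pip p / 2)) : |sinp t| < 1 := by
  have hc := pip_pos hp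
  have hmono := h.strictMonoOn_sinp hp
  rw [abs_lt, ← h.sinp_left hp, ← h.sinp_right hp]
  exact ⟨hmono ⟨le_rfl, by linarith⟩ (Ioo_subset_Icc_self ht) ht.1,
    hmono (Ioo_subset_Icc_self ht) ⟨by linarith, le_rfl⟩ ht.2⟩

lemma sinp_neg (h : IsPTrig p sinp cosp) (hp : 1 < p) {t : ℝ}
    (ht : t ∈ Icc (-(pip p / 2)) (pip p / 2)) : sinp (-t) = -sinp t := by
  have ht' : -t ∈ Icc (-(pip p / 2)) (pip p / 2) := ⟨by linarith [ht.2], by linarith [ht.1]⟩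
  have hs := h.sinp_mem_Icc hp ht
  refine (strictMonoOn_arcsinp hp).injOn (h.sinp_mem_Icc hp ht')
    ⟨by linarith [hs.2], by linarith [hs.1]⟩ ?_
  rw [arcsinp_neg, h.arcsinp_sinp ht', h.arcsinp_sinp ht]

lemma sinp_ne_zero (h : IsPTrig p sinp cosp) {t : ℝ}
    (ht : t ∈ Icc (-(pip p / 2)) (pip p / 2)) (ht0 : t ≠ 0) : sinp t ≠ 0 :=
  fun hs => ht0 (by rw [← h.arcsinp_sinp ht, hs, arcsinp_zero])

lemma cosp_eq (h : IsPTrig p sinp cosp) (hp : 1 < p) {t : ℝ}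
    (ht : t ∈ Icc (-(pip p / 2)) (pip p / 2)) : cosp t = (1 - |sinp t| ^ p) ^ (1 / p) := by
  have hp' : p⁻¹ ≠ 0 := by positivity
  rcases eq_or_ne t (pip p / 2) with rfl | hright
  · simp [h.cosp_right_eq_zero hp, h.sinp_right hp, zero_rpow hp']
  rcases eq_or_ne t (-(pip p / 2)) with rfl | hleft
  · simp [h.cosp_left_eq_zero hp, h.sinp_left hp, zero_rpow hp']
  have hs := h.abs_sinp_lt_one hp
    ⟨lt_of_le_of_ne ht.1 (Ne.symm hleft), lt_of_le_of_ne ht.2 hright⟩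
  have hbase : 0 < 1 - |sinp t| ^ p := sub_pos.2 (rpow_lt_one (abs_nonneg _) hs (by linarith))
  have hmul := h.pIntegrand_sinp_mul_cosp hp ht hs.ne
  rw [pIntegrand, neg_div, rpow_neg hbase.le] at hmul
  exact ((inv_mul_eq_one₀ (rpow_pos_of_pos hbase _).ne').1 hmul).symm

lemma cosp_neg (h : IsPTrig p sinp cosp) (hp : 1 < p) {t : ℝ}
    (ht : t ∈ Icc (-(pip p / 2)) (pip p / 2)) : cosp (-t) = cosp t := by
  rw [h.cosp_eq hp ⟨by linarith [ht.2], by linarith [ht.1]⟩, h.cosp_eq hp ht, h.sinp_neg hp ht,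
    abs_neg]

lemma cosp_nonneg (h : IsPTrig p sinp cosp) (hp : 1 < p) {t : ℝ}
    (ht : t ∈ Icc (-(pip p / 2)) (pip p / 2)) : 0 ≤ cosp t := by
  have hs := h.sinp_mem_Icc hp ht
  have : |sinp t| ^ p ≤ 1 := rpow_le_one (abs_nonneg _) (abs_le.2 hs) (by linarith)
  rw [h.cosp_eq hp ht]
  exact rpow_nonneg (by linarith) _

lemma cosp_pos (h : IsPTrig p sinp cosp) (hp : 1 < p) {t : ℝ}
    (ht : t ∈ Ioo (-(pip p / 2)) (pip p / 2)) : 0 < cosp t := by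
  have : |sinp t| ^ p < 1 := rpow_lt_one (abs_nonneg _) (h.abs_sinp_lt_one hp ht) (by linarith)
  rw [h.cosp_eq hp (Ioo_subset_Icc_self ht)]
  exact rpow_pos_of_pos (by linarith) _

lemma continuousOn_cosp (h : IsPTrig p sinp cosp) (hp : 1 < p) :
    ContinuousOn cosp (Icc (-(pip p / 2)) (pip p / 2)) := by
  have hbase : Continuous fun t => 1 - |sinp t| ^ p :=
    continuous_const.sub (h.continuous_sinp.abs.rpow_const fun _ => Or.inr (by linarith))
  have hcont : Continuous fun t => (1 - |sinp t| ^ p) ^ (1 / p) :=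
    hbase.rpow_const fun _ => Or.inr (by positivity)
  exact hcont.continuousOn.congr fun t ht => h.cosp_eq hp ht

lemma continuousOn_spow_cosp (h : IsPTrig p sinp cosp) (hp : 1 < p) {q : ℝ} (hq : 0 < q) :
    ContinuousOn (fun t => spow (cosp t) q) (Icc (-(pip p / 2)) (pip p / 2)) :=
  ((h.continuousOn_cosp hp).rpow_const fun _ _ => Or.inr hq.le).congr fun _ ht =>
    spow_of_nonneg (h.cosp_nonneg hp ht) hq.ne'

end IsPTrig

lemma intervalIntegral.integral_eq_zero_of_odd_on {f : ℝ → ℝ} {c : ℝ} (hc : 0 ≤ c)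
    (hf : ∀ x ∈ Icc (-c) c, f (-x) = -f x) : ∫ x in -c..c, f x = 0 := by
  have h : ∫ x in -c..c, f x = -∫ x in -c..c, f x := calc
    ∫ x in -c..c, f x = ∫ x in -c..c, f (-x) := by rw [integral_comp_neg, neg_neg]
    _ = ∫ x in -c..c, -f x :=
      integral_congr fun x hx => hf x (by rwa [uIcc_of_le (by linarith)] at hx)
    _ = -∫ x in -c..c, f x := integral_neg
  linarith

lemma two_div_sub_div_sq_le_inv {x m : ℝ} (hx : 0 < x) (hm : m ≠ 0) :
    2 / m - x / m ^ 2 ≤ x⁻¹ := by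
  have hgap : x⁻¹ - (2 / m - x / m ^ 2) = (x - m) ^ 2 / (x * m ^ 2) := by
    field_simp; ring
  have : 0 ≤ (x - m) ^ 2 / (x * m ^ 2) := by positivity
  linarith

lemma two_div_sub_div_sq_lt_inv {x m : ℝ} (hx : 0 < x) (hm : m ≠ 0) (hxm : x ≠ m) :
    2 / m - x / m ^ 2 < x⁻¹ := by
  have hgap : x⁻¹ - (2 / m - x / m ^ 2) = (x - m) ^ 2 / (x * m ^ 2) := by
    field_simp; ring
  have : 0 < (x - m) ^ 2 / (x * m ^ 2) :=
    div_pos (pow_two_pos_of_ne_zero (sub_ne_zero.2 hxm)) (by positivity)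
  linarith

/-- Strict Jensen inequality for `x ↦ 1/x`, via its tangent line `2/m - x/m²` at the mean `m`. -/
lemma lt_integral_inv_of_integral_eq_mul {u : ℝ → ℝ} {a b m : ℝ} (hab : a < b) (hm : 0 < m)
    (hu : ContinuousOn u (Icc a b)) (hpos : ∀ x ∈ Icc a b, 0 < u x)
    (hmean : ∫ x in a..b, u x = (b - a) * m) (hne : ∃ x ∈ Icc a b, u x ≠ m) :
    (b - a) / m < ∫ x in a..b, (u x)⁻¹ := by
  obtain ⟨x₀, hx₀, hx₀m⟩ := hne
  calc (b - a) / m = ∫ x in a..b, (2 / m - u x / m ^ 2) := by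
        rw [intervalIntegral.integral_sub intervalIntegrable_const
          ((hu.intervalIntegrable_of_Icc hab.le).div_const _), intervalIntegral.integral_const,
          intervalIntegral.integral_div, hmean, smul_eq_mul]
        field_simp
        ring
    _ < ∫ x in a..b, (u x)⁻¹ :=
      intervalIntegral.integral_lt_integral_of_continuousOn_of_le_of_exists_lt hab
        (continuousOn_const.sub (hu.div_const _)) (hu.inv₀ fun x hx => (hpos x hx).ne')
        (fun x hx => two_div_sub_div_sq_le_inv (hpos x (Ioc_subset_Icc_self hx)) hm.ne')
        ⟨x₀, hx₀, two_div_sub_div_sq_lt_inv (hpos x₀ hx₀) hm.ne' hx₀m⟩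

lemma hitting_time_eq_integral_inv {φ ψ : ℝ → ℝ} {a b δ : ℝ} (hφ : ContinuousOn φ (Icc a b))
    (hφpos : ∀ y ∈ Icc a b, 0 < φ y) (hψ : ∀ t, HasDerivAt ψ (φ (ψ t)) t) (hψ0 : ψ 0 = a)
    (hδ0 : 0 ≤ δ) (hδ : ψ δ = b) (hfirst : ∀ t ∈ Ico 0 δ, ψ t < b) :
    δ = ∫ y in a..b, (φ y)⁻¹ := by
  have hψc : Continuous ψ := continuous_iff_continuousAt.2 fun t => (hψ t).continuousAt
  -- `ψ` cannot fall below `a`, since it is increasing whenever it sits at `a`.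
  have hlower : ∀ t ∈ Icc 0 δ, a ≤ ψ t :=
    image_le_of_deriv_right_lt_deriv_boundary' continuousOn_const
      (fun _ _ => hasDerivWithinAt_const _ _ a) hψ0.ge hψc.continuousOn
      (fun t _ => (hψ t).hasDerivWithinAt) fun t ht hat => by
        rw [← hat]; exact hφpos a ⟨le_rfl, hat.le.trans (hfirst t ht).le⟩
  have hmaps : MapsTo ψ (uIcc 0 δ) (Icc a b) := by
    rw [uIcc_of_le hδ0]
    intro t ht
    refine ⟨hlower t ht, ?_⟩
    rcases ht.2.eq_or_lt with rfl | hlt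
    · exact hδ.le
    · exact (hfirst t ⟨ht.1, hlt⟩).le
  have hsubst := intervalIntegral.integral_comp_mul_deriv' (fun t _ => hψ t)
    (hφ.comp hψc.continuousOn hmaps)
    ((hφ.inv₀ fun y hy => (hφpos y hy).ne').mono (mapsTo_iff_image_subset.1 hmaps))
  simp only [hψ0, hδ, Function.comp_apply, Pi.inv_apply] at hsubst
  rw [← hsubst, intervalIntegral.integral_congr (g := fun _ => (1 : ℝ)) fun t ht =>
    inv_mul_cancel₀ (hφpos _ (hmaps ht)).ne']
  simp

/-- if `α + γ·cos_p^{(p-1)}(ψ)·sin_p(ψ) > 0` on `[-π_p/2, π_p/2]`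
(`γ > 0`, `α > 0`), the time `δ` for the solution of
`ψ' = α + γ·cos_p^{(p-1)}(ψ)·sin_p(ψ)`, `ψ(0) = -π_p/2`, to first reach `π_p/2`
equals `∫_{-π_p/2}^{π_p/2} dψ/(α + γ·cos_p^{(p-1)}(ψ)·sin_p(ψ))`, and this
integral is strictly greater than `π_p/α`. -/
theorem stmt10 (p α γ : ℝ) (hp : 1 < p) (hα : 0 < α) (hγ : 0 < γ)
    (sinp cosp : ℝ → ℝ) (htrig : IsPTrig p sinp cosp)
    (hpos : ∀ x ∈ Set.Icc (-(pip p)/2) (pip p/2),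
      0 < α + γ * spow (cosp x) (p-1) * sinp x)
    (ψ : ℝ → ℝ) (hψ0 : ψ 0 = -(pip p)/2)
    (hψ : ∀ t, HasDerivAt ψ (α + γ * spow (cosp (ψ t)) (p-1) * sinp (ψ t)) t)
    (δ : ℝ) (hδ0 : 0 ≤ δ) (hδ : ψ δ = pip p / 2)
    (hfirst : ∀ t ∈ Set.Ico 0 δ, ψ t < pip p / 2) :
    δ = (∫ x in (-(pip p)/2)..(pip p/2),
          (α + γ * spow (cosp x) (p-1) * sinp x)⁻¹) ∧
    pip p / α < ∫ x in (-(pip p)/2)..(pip p/2),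
          (α + γ * spow (cosp x) (p-1) * sinp x)⁻¹ := by
  have hc : 0 < pip p / 2 := by linarith [pip_pos hp]
  rw [neg_div] at hpos hψ0 ⊢
  have hexp : 0 < p - 1 := by linarith
  have hoddCont : ContinuousOn (fun x => γ * spow (cosp x) (p-1) * sinp x)
      (Icc (-(pip p / 2)) (pip p / 2)) :=
    (continuousOn_const.mul (htrig.continuousOn_spow_cosp hp hexp)).mul
      htrig.continuous_sinp.continuousOn
  have hcont : ContinuousOn (fun x => α + γ * spow (cosp x) (p-1) * sinp x)
      (Icc (-(pip p / 2)) (pip p / 2)) := continuousOn_const.add hoddCont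
  refine ⟨hitting_time_eq_integral_inv hcont hpos hψ hψ0 hδ0 hδ hfirst, ?_⟩
  have hodd : ∫ x in -(pip p / 2)..pip p / 2, γ * spow (cosp x) (p-1) * sinp x = 0 :=
    intervalIntegral.integral_eq_zero_of_odd_on hc.le fun x hx => by
      rw [htrig.cosp_neg hp hx, htrig.sinp_neg hp hx, mul_neg]
  have hmean : ∫ x in -(pip p / 2)..pip p / 2, (α + γ * spow (cosp x) (p-1) * sinp x) =
      (pip p / 2 - -(pip p / 2)) * α := by
    rw [intervalIntegral.integral_add intervalIntegrable_const
      (hoddCont.intervalIntegrable_of_Icc (by linarith)), hodd, intervalIntegral.integral_const,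
      smul_eq_mul, add_zero]
  have hmid : pip p / 4 ∈ Ioo (-(pip p / 2)) (pip p / 2) := ⟨by linarith, by linarith⟩
  have hne : γ * spow (cosp (pip p / 4)) (p-1) * sinp (pip p / 4) ≠ 0 := by
    rw [spow_of_nonneg (htrig.cosp_nonneg hp (Ioo_subset_Icc_self hmid)) hexp.ne']
    exact mul_ne_zero (mul_ne_zero hγ.ne' (rpow_pos_of_pos (htrig.cosp_pos hp hmid) _).ne')
      (htrig.sinp_ne_zero (Ioo_subset_Icc_self hmid) (by linarith))
  have := lt_integral_inv_of_integral_eq_mul (by linarith) hα hcont hpos hmean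
    ⟨_, Ioo_subset_Icc_self hmid, fun h => hne (by linarith)⟩
  rwa [sub_neg_eq_add, add_halves] at this
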